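/- Let S be a finite set, D : S → [0,∞) with Σ_{x∈S} D(x) = 1, and h, c : S → {-1,1}; let ε̃ := Σ_{x : h(x) ≠ c(x)} D(x). Let q ≥ 3 be a real with 0 ≤ ε̃ ≤ 1/q, set ε' := 1/q, α' := (1/2)·ln(q-1), Z' := 2·(1+2/q)·√((1/q)·(1-1/q)), and Z := (1-ε̃)·(2-1/q)·exp(-α') + ε̃·(1/q)·exp(α'). Define D'(x) := D(x)·(2-1/q)·exp(-α')/Z' if h(x) = c(x), D'(x) := D(x)·(1/q)·exp(α')/Z' if h(x) ≠ c(x), and D*(x) := the same numerator as D'(x) but divided by Z instead of Z'. Then Σ_{x∈S} |D'(x) - D*(x)| ≤ 5/q. -/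

import Mathlib

/-!
Both updates reweight `D` by the same nonnegative weights `w`, whose total mass is `Z`; they differ
only in the normalizer. Hence the ℓ¹ distance is `Z · |1/Z' - 1/Z| = |Z / Z' - 1|`. With
`e^{α'} = √(q-1)` the square roots cancel in `Z / Z' = q (2q - 1 - ε̃q) / (2 (q+2) (q-1))`, and
`0 ≤ ε̃ q ≤ 1` bounds its distance from `1` by `5/q`.
-/

open Real Finset

lemma sum_abs_div_sub_div_eq_abs_div_sub_one {α : Type*} {S : Finset α} {w : α → ℝ} {Z : ℝ}
    (hw : ∀ x ∈ S, 0 ≤ w x) (hwZ : ∑ x ∈ S, w x = Z) (hZ : 0 < Z) (Z' : ℝ) :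
    ∑ x ∈ S, |w x / Z' - w x / Z| = |Z / Z' - 1| := by
  have hterm : ∀ x ∈ S, |w x / Z' - w x / Z| = w x * |Z'⁻¹ - Z⁻¹| := fun x hx => by
    rw [div_eq_mul_inv, div_eq_mul_inv, ← mul_sub, abs_mul, abs_of_nonneg (hw x hx)]
  rw [sum_congr rfl hterm, ← sum_mul, hwZ, ← abs_of_pos hZ, ← abs_mul, abs_of_pos hZ, mul_sub,
    mul_inv_cancel₀ hZ.ne', div_eq_mul_inv]

lemma exp_half_mul_log {x : ℝ} (hx : 0 < x) : exp (1 / 2 * log x) = √x := by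
  rw [sqrt_eq_rpow, rpow_def_of_pos hx, mul_comm]

section Normalizers

variable {q ε : ℝ}

lemma normalizer_eq (hq : 1 < q) :
    (1 - ε) * (2 - 1 / q) * exp (-(1 / 2 * log (q - 1))) + ε * (1 / q) * exp (1 / 2 * log (q - 1))
      = (2 * q - 1 - ε * q) / (q * √(q - 1)) := by
  have hr : √(q - 1) ^ 2 = q - 1 := sq_sqrt (by linarith)
  have : 0 < √(q - 1) := sqrt_pos.2 (by linarith)
  rw [exp_neg, exp_half_mul_log (by linarith)]
  field_simp
  linear_combination ε * hr

lemma approx_normalizer_eq (hq : 1 < q) :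
    2 * (1 + 2 / q) * √((1 / q) * (1 - 1 / q)) = 2 * (q + 2) * √(q - 1) / q ^ 2 := by
  have hq0 : 0 < q := by linarith
  rw [show (1 / q) * (1 - 1 / q) = (q - 1) / q ^ 2 by field_simp, sqrt_div' _ (by positivity),
    sqrt_sq hq0.le]
  field_simp

lemma normalizer_div_approx_normalizer (hq : 1 < q) :
    (2 * q - 1 - ε * q) / (q * √(q - 1)) / (2 * (q + 2) * √(q - 1) / q ^ 2)
      = q * (2 * q - 1 - ε * q) / (2 * (q + 2) * (q - 1)) := by
  have hr : √(q - 1) ^ 2 = q - 1 := sq_sqrt (by linarith)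
  have : 0 < √(q - 1) := sqrt_pos.2 (by linarith)
  have : q - 1 ≠ 0 := by linarith
  have : 0 < q := by linarith
  field_simp
  rw [hr]

lemma abs_normalizer_ratio_sub_one_le (hq : 3 ≤ q) (hε : 0 ≤ ε) (hεq : ε ≤ 1 / q) :
    |q * (2 * q - 1 - ε * q) / (2 * (q + 2) * (q - 1)) - 1| ≤ 5 / q := by
  have hq0 : 0 < q := by linarith
  have hεq' : ε * q ≤ 1 := (le_div_iff₀ hq0).1 hεq
  have hden : 0 < 2 * (q + 2) * (q - 1) := by nlinarith
  rw [div_sub_one hden.ne', abs_div, abs_of_pos hden, abs_of_nonpos (by nlinarith),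
    div_le_div_iff₀ hden hq0]
  nlinarith

end Normalizers

theorem no_instance_l1_general {α : Type*} (S : Finset α) (D h c : α → ℝ)
    (hD : ∀ x ∈ S, 0 ≤ D x) (hsum : ∑ x ∈ S, D x = 1)
    (q εt : ℝ) (hq : 3 ≤ q)
    (hεt : εt = ∑ x ∈ S.filter (fun x => h x ≠ c x), D x)
    (hεtq : εt ≤ 1 / q)
    (α' Z' Z : ℝ) (hα' : α' = (1 / 2) * Real.log (q - 1))
    (hZ' : Z' = 2 * (1 + 2 / q) * Real.sqrt ((1 / q) * (1 - 1 / q)))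
    (hZ : Z = (1 - εt) * (2 - 1 / q) * Real.exp (-α') + εt * (1 / q) * Real.exp α')
    (D' Dstar : α → ℝ)
    (hD' : ∀ x ∈ S, D' x =
      if h x = c x then D x * (2 - 1 / q) * Real.exp (-α') / Z'
      else D x * (1 / q) * Real.exp α' / Z')
    (hDstar : ∀ x ∈ S, Dstar x =
      if h x = c x then D x * (2 - 1 / q) * Real.exp (-α') / Z
      else D x * (1 / q) * Real.exp α' / Z) :
    ∑ x ∈ S, |D' x - Dstar x| ≤ 5 / q := by
  have hq1 : 1 < q := by linarith
  have hεt0 : 0 ≤ εt := hεt ▸ sum_nonneg fun x hx => hD x (mem_filter.1 hx).1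
  set w : α → ℝ := fun x =>
    if h x = c x then D x * (2 - 1 / q) * exp (-α') else D x * (1 / q) * exp α'
  have hw : ∀ x ∈ S, 0 ≤ w x := fun x hx => by
    have hDx := hD x hx
    have hq2 : 0 ≤ 2 - 1 / q := by rw [sub_nonneg, div_le_iff₀ (by linarith)]; linarith
    dsimp only [w]; split_ifs <;> positivity
  have hwZ : ∑ x ∈ S, w x = Z := by
    have hcorrect : ∑ x ∈ S.filter (fun x => h x = c x), D x = 1 - εt := by
      rw [hεt, ← hsum, ← sum_filter_add_sum_filter_not S (fun x => h x = c x)]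
      ring
    rw [sum_ite, ← sum_mul, ← sum_mul, ← sum_mul, ← sum_mul, hcorrect, ← hεt, hZ]
  have hZ_eq : Z = (2 * q - 1 - εt * q) / (q * √(q - 1)) := by rw [hZ, hα', normalizer_eq hq1]
  have hZ0 : 0 < Z := by
    have : εt * q ≤ 1 := (le_div_iff₀ (by linarith)).1 hεtq
    rw [hZ_eq]; apply div_pos <;> nlinarith [sqrt_pos.2 (by linarith : (0 : ℝ) < q - 1)]
  calc ∑ x ∈ S, |D' x - Dstar x| = ∑ x ∈ S, |w x / Z' - w x / Z| :=
        sum_congr rfl fun x hx => by rw [hD' x hx, hDstar x hx, ite_div, ite_div]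
    _ = |Z / Z' - 1| := sum_abs_div_sub_div_eq_abs_div_sub_one hw hwZ hZ0 Z'
    _ = |q * (2 * q - 1 - εt * q) / (2 * (q + 2) * (q - 1)) - 1| := by
        rw [hZ_eq, hZ', approx_normalizer_eq hq1, normalizer_div_approx_normalizer hq1]
    _ ≤ 5 / q := abs_normalizer_ratio_sub_one_le hq hεt0 hεtq

/-- ℓ¹ distance between the approximately normalized ('no'-instance)
    distribution update D' and the exactly normalized update D* is at most 5/q. -/
theorem no_instance_l1 {α : Type*} (S : Finset α) (D h c : α → ℝ)
    (hD : ∀ x ∈ S, 0 ≤ D x) (hsum : ∑ x ∈ S, D x = 1)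
    (hh : ∀ x ∈ S, h x = 1 ∨ h x = -1) (hc : ∀ x ∈ S, c x = 1 ∨ c x = -1)
    (q εt : ℝ) (hq : 3 ≤ q)
    (hεt : εt = ∑ x ∈ S.filter (fun x => h x ≠ c x), D x)
    (hεtq : εt ≤ 1 / q)
    (α' Z' Z : ℝ) (hα' : α' = (1 / 2) * Real.log (q - 1))
    (hZ' : Z' = 2 * (1 + 2 / q) * Real.sqrt ((1 / q) * (1 - 1 / q)))
    (hZ : Z = (1 - εt) * (2 - 1 / q) * Real.exp (-α') + εt * (1 / q) * Real.exp α')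
    (D' Dstar : α → ℝ)
    (hD' : ∀ x ∈ S, D' x =
      if h x = c x then D x * (2 - 1 / q) * Real.exp (-α') / Z'
      else D x * (1 / q) * Real.exp α' / Z')
    (hDstar : ∀ x ∈ S, Dstar x =
      if h x = c x then D x * (2 - 1 / q) * Real.exp (-α') / Z
      else D x * (1 / q) * Real.exp α' / Z) :
    ∑ x ∈ S, |D' x - Dstar x| ≤ 5 / q :=
  no_instance_l1_general S D h c hD hsum q εt hq hεt hεtq α' Z' Z hα' hZ' hZ D' Dstar hD' hDstar
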